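/- Let (Y_t)_{t∈[0,T]} be a nonnegative (F_t)-progressively measurable process with each Y_t integrable and sup_{t∈[0,T]} E[Y_t] < +∞, let (φ_t)_{t∈[0,T]} be a nonnegative progressively measurable process with E[∫₀^T φ_s ds] < +∞, let u ∈ L¹([0,T];ℝ₊) and k₁, k₂ ≥ 0. Assume that for each t ∈ [0,T], almost surely Y_t ≤ E[∫₀^T φ_s ds | F_t] + E[∫_t^T u(s)(k₁ + k₂ Y_s) ds | F_t]. Then for each t ∈ [0,T], almost surely Y_t ≤ ( k₁ ∫₀^T u(s) ds + E[∫₀^T φ_s ds | F_t] ) · exp( k₂ ∫₀^T u(s) ds ). (Conditional Gronwall estimate (20) in the proof of Theorem 2.4.) -/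

import Mathlib

/-!
Fix `t` and `A ∈ ℱ t`. For `s ≥ t` also `A ∈ ℱ s`, so integrating the hypothesis over `A`
removes the conditional expectations, and Fubini turns it into the deterministic backward
Gronwall inequality `f s ≤ b + k₂ ∫_{(s,T]} u f` for `f s = ∫_A Y_s dP` and
`b = ∫_A ∫ φ + k₁ P(A) ∫ u`. Iterating it `n` times leaves a remainder bounded by
`C (k₂ ∫ u)ⁿ / n!`, hence `f t ≤ b exp (k₂ ∫ u)`. The iterated integrals are controlled by
`∫_{(s,∞)} ν(r,∞)ⁿ dν(r) ≤ ν(s,∞)ⁿ⁺¹ / (n+1)`, valid for every finite measure `ν`: under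
`ν^{⊗(n+1)}` the events "coordinate `k` is the strict minimum" are disjoint and each has
measure `∫ ν(r,∞)ⁿ dν(r)`. As `A ∈ ℱ t` is arbitrary and both sides of the claim are
`ℱ t`-measurable, the almost sure inequality follows.
-/

open MeasureTheory Set Filter Topology

noncomputable section

/-- The time interval `[0,T]`, where `0 < T ≤ +∞` is an extended real
(understood as `[0,+∞)` when `T = +∞`). -/
def timeSet (T : EReal) : Set ℝ := {s : ℝ | 0 ≤ s ∧ (s : EReal) ≤ T}

open scoped ENNReal

namespace MeasureTheory

namespace Measure

variable {μ : Measure ℝ}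

theorem measurable_measureReal_Ioi [IsFiniteMeasure μ] : Measurable fun r => μ.real (Ioi r) :=
  Antitone.measurable fun _ _ hab => measureReal_mono (Ioi_subset_Ioi hab)

variable [SigmaFinite μ]

theorem pi_setOf_forall_lt_eq_lintegral {n : ℕ} (k : Fin (n + 1)) :
    Measure.pi (fun _ => μ) {x | ∀ i, i ≠ k → x k < x i} = ∫⁻ r, μ (Ioi r) ^ n ∂μ := by
  set B : Set (ℝ × (Fin n → ℝ)) := {p | ∀ j, p.1 < p.2 j}
  have hB : MeasurableSet B := by
    simp only [B, ofPred_forall]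
    exact .iInter fun j =>
      measurableSet_lt measurable_fst ((measurable_pi_apply j).comp measurable_snd)
  have hpre : MeasurableEquiv.piFinSuccAbove (fun _ => ℝ) k ⁻¹' B
      = {x | ∀ i, i ≠ k → x k < x i} := by
    ext x
    simp only [B, mem_preimage, mem_ofPred_eq, MeasurableEquiv.piFinSuccAbove_apply,
      Fin.insertNthEquiv_symm_apply, Fin.forall_iff_succAbove k]
    simp [Fin.removeNth]
  rw [← hpre, (measurePreserving_piFinSuccAbove (fun _ => μ) k).measure_preimage
    hB.nullMeasurableSet, Measure.prod_apply hB]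
  refine lintegral_congr fun r => ?_
  have : Prod.mk r ⁻¹' B = univ.pi fun _ => Ioi r := by ext; simp [B]
  simp [this, Measure.pi_pi]

theorem add_one_mul_lintegral_measure_Ioi_pow_le [IsFiniteMeasure μ] (n : ℕ) :
    (n + 1 : ℝ≥0∞) * ∫⁻ r, μ (Ioi r) ^ n ∂μ ≤ μ univ ^ (n + 1) := by
  set A : Fin (n + 1) → Set (Fin (n + 1) → ℝ) := fun k => {x | ∀ i, i ≠ k → x k < x i}
  have hA : ∀ k, MeasurableSet (A k) := fun k => by
    simp only [A, ofPred_forall]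
    exact .iInter fun i => .iInter fun _ =>
      measurableSet_lt (measurable_pi_apply k) (measurable_pi_apply i)
  have hdisj : Pairwise (Function.onFun Disjoint A) := fun k l hkl =>
    disjoint_left.2 fun x hk hl => (hk l hkl.symm).not_gt (hl k hkl)
  calc (n + 1 : ℝ≥0∞) * ∫⁻ r, μ (Ioi r) ^ n ∂μ
      = ∑ k, Measure.pi (fun _ => μ) (A k) := by
        simp [A, pi_setOf_forall_lt_eq_lintegral]
    _ = Measure.pi (fun _ => μ) (⋃ k, A k) := by rw [measure_iUnion hdisj hA, tsum_fintype]
    _ ≤ Measure.pi (fun _ => μ) univ := measure_mono (subset_univ _)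
    _ = μ univ ^ (n + 1) := by simp [Measure.pi_univ]

theorem setLIntegral_measure_Ioi_pow_le [IsFiniteMeasure μ] (n : ℕ) (s : ℝ) :
    ∫⁻ r in Ioi s, μ (Ioi r) ^ n ∂μ ≤ μ (Ioi s) ^ (n + 1) / (n + 1) := by
  have hres : ∀ r ∈ Ioi s, μ (Ioi r) = μ.restrict (Ioi s) (Ioi r) := fun r hr => by
    rw [Measure.restrict_apply measurableSet_Ioi,
      inter_eq_self_of_subset_left (Ioi_subset_Ioi hr.le)]
  rw [setLIntegral_congr_fun measurableSet_Ioi fun r hr => by rw [hres r hr],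
    ENNReal.le_div_iff_mul_le (by simp) (by simp), mul_comm, ← Measure.restrict_apply_univ]
  exact add_one_mul_lintegral_measure_Ioi_pow_le n

theorem setIntegral_measureReal_Ioi_pow_le [IsFiniteMeasure μ] (n : ℕ) (s : ℝ) :
    ∫ r in Ioi s, μ.real (Ioi r) ^ n ∂μ ≤ μ.real (Ioi s) ^ (n + 1) / ((n : ℝ) + 1) := by
  rw [integral_eq_lintegral_of_nonneg_ae (ae_of_all _ fun r => by positivity)
    (measurable_measureReal_Ioi.pow_const n).aestronglyMeasurable]
  simp_rw [ENNReal.ofReal_pow measureReal_nonneg, ofReal_measureReal (measure_ne_top _ _)]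
  calc (∫⁻ r in Ioi s, μ (Ioi r) ^ n ∂μ).toReal
      ≤ (μ (Ioi s) ^ (n + 1) / (n + 1)).toReal :=
        ENNReal.toReal_mono (by finiteness) (setLIntegral_measure_Ioi_pow_le n s)
    _ = μ.real (Ioi s) ^ (n + 1) / ((n : ℝ) + 1) := by
        rw [ENNReal.toReal_div, ENNReal.toReal_pow]; norm_cast

open scoped Nat in
theorem setIntegral_measureReal_Ioi_pow_div_factorial_le [IsFiniteMeasure μ] (n : ℕ) (s : ℝ) :
    ∫ r in Ioi s, μ.real (Ioi r) ^ n / n ! ∂μ ≤ μ.real (Ioi s) ^ (n + 1) / (n + 1)! := by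
  rw [integral_div, Nat.factorial_succ, Nat.cast_mul, Nat.cast_succ, ← div_div]
  gcongr
  exact setIntegral_measureReal_Ioi_pow_le n s

end Measure

theorem setIntegral_withDensity_ofReal {α : Type*} [MeasurableSpace α]
    {μ : Measure α} {S s : Set α} (hS : MeasurableSet S) (hs : MeasurableSet s) {w : α → ℝ}
    (hw : AEMeasurable w (μ.restrict S)) (hw_nonneg : ∀ x ∈ S, 0 ≤ w x) (g : α → ℝ) :
    ∫ x in s, g x ∂(μ.restrict S).withDensity (fun x => ENNReal.ofReal (w x))
      = ∫ x in s ∩ S, w x * g x ∂μ := by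
  rw [show (fun x => ENNReal.ofReal (w x)) = fun x => ((w x).toNNReal : ENNReal) from rfl,
    setIntegral_withDensity_eq_setIntegral_smul₀ hw.real_toNNReal.restrict g hs,
    Measure.restrict_restrict hs]
  refine setIntegral_congr_fun (hs.inter hS) fun x hx => ?_
  simp [NNReal.smul_def, Real.coe_toNNReal _ (hw_nonneg x hx.2)]

section Gronwall

open scoped Nat

variable {μ : Measure ℝ} [IsFiniteMeasure μ] {f : ℝ → ℝ} {b C t : ℝ}

theorem le_sum_add_of_le_add_setIntegral_Ioi (hf : Measurable f) (hfC : ∀ s, |f s| ≤ C)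
    (hb : 0 ≤ b) (h : ∀ s, t ≤ s → f s ≤ b + ∫ r in Ioi s, f r ∂μ) (n : ℕ) {s : ℝ}
    (hs : t ≤ s) :
    f s ≤ b * ∑ j ∈ Finset.range n, μ.real (Ioi s) ^ j / j ! + C * (μ.real (Ioi s) ^ n / n !) := by
  induction n generalizing s with
  | zero => simpa using (le_abs_self _).trans (hfC s)
  | succ n ih =>
    set F : ℝ → ℝ := fun r => μ.real (Ioi r)
    have hint : ∀ j : ℕ, Integrable (fun r => F r ^ j / j !) (μ.restrict (Ioi s)) := fun j =>
      .of_bound ((Measure.measurable_measureReal_Ioi.pow_const j).div_const _).aestronglyMeasurable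
        (μ.real univ ^ j / j !) (ae_of_all _ fun r => by
          rw [Real.norm_of_nonneg (by positivity)]
          gcongr
          exact measureReal_mono (subset_univ _))
    calc f s ≤ b + ∫ r in Ioi s, f r ∂μ := h s hs
      _ ≤ b + ∫ r in Ioi s, (b * ∑ j ∈ Finset.range n, F r ^ j / j ! + C * (F r ^ n / n !)) ∂μ := by
          refine add_le_add le_rfl
            (setIntegral_mono_on ?_ ?_ measurableSet_Ioi fun r hr => ih (hs.trans hr.out.le))
          · exact Integrable.of_bound hf.aestronglyMeasurable C (ae_of_all _ hfC)
          · exact ((integrable_finsetSum _ fun j _ => hint j).const_mul b).add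
              ((hint n).const_mul C)
      _ = b + (b * ∑ j ∈ Finset.range n, ∫ r in Ioi s, F r ^ j / j ! ∂μ
            + C * ∫ r in Ioi s, F r ^ n / n ! ∂μ) := by
          rw [integral_add ((integrable_finsetSum _ fun j _ => hint j).const_mul b)
            ((hint n).const_mul C), integral_const_mul, integral_const_mul,
            integral_finsetSum _ fun j _ => hint j]
      _ ≤ b + (b * ∑ j ∈ Finset.range n, F s ^ (j + 1) / (j + 1)!
            + C * (F s ^ (n + 1) / (n + 1)!)) := by
          have hC : 0 ≤ C := (abs_nonneg _).trans (hfC s)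
          gcongr with j
          exacts [Measure.setIntegral_measureReal_Ioi_pow_div_factorial_le j s,
            Measure.setIntegral_measureReal_Ioi_pow_div_factorial_le n s]
      _ = b * ∑ j ∈ Finset.range (n + 1), F s ^ j / j ! + C * (F s ^ (n + 1) / (n + 1)!) := by
          rw [Finset.sum_range_succ']
          simp only [pow_zero, Nat.factorial_zero, Nat.cast_one, div_one]
          ring

theorem le_mul_exp_of_le_add_setIntegral_Ioi (hf : Measurable f) (hfC : ∀ s, |f s| ≤ C)
    (hb : 0 ≤ b) (h : ∀ s, t ≤ s → f s ≤ b + ∫ r in Ioi s, f r ∂μ) :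
    f t ≤ b * Real.exp (μ.real (Ioi t)) := by
  have hlim : Tendsto (fun n : ℕ => b * Real.exp (μ.real (Ioi t)) + C * (μ.real (Ioi t) ^ n / n !))
      atTop (𝓝 (b * Real.exp (μ.real (Ioi t)))) := by
    simpa using tendsto_const_nhds.add
      ((FloorSemiring.tendsto_pow_div_factorial_atTop (μ.real (Ioi t))).const_mul C)
  refine ge_of_tendsto hlim (Eventually.of_forall fun n => ?_)
  refine (le_sum_add_of_le_add_setIntegral_Ioi hf hfC hb h n le_rfl).trans ?_
  gcongr
  exact Real.sum_le_exp_of_nonneg measureReal_nonneg n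

theorem le_mul_exp_of_le_add_setIntegral_Ioi_inter {S : Set ℝ} {w : ℝ → ℝ}
    (hS : MeasurableSet S) (hw : IntegrableOn w S) (hw_nonneg : ∀ r ∈ S, 0 ≤ w r)
    (hf : Measurable f) (hf_nonneg : ∀ r ∈ S, 0 ≤ f r) (hfC : ∀ r ∈ S, f r ≤ C) (hb : 0 ≤ b)
    (h : ∀ s ∈ S, t ≤ s → f s ≤ b + ∫ r in Ioi s ∩ S, w r * f r) (ht : t ∈ S) :
    f t ≤ b * Real.exp (∫ r in Ioi t ∩ S, w r) := by
  -- `ν = w(r) dr` on `S`; the indicator of `f` vanishes off `S`, so it satisfies the hypothesis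
  -- at every `s ≥ t`, not only at `s ∈ S`.
  set ν := (volume.restrict S).withDensity fun r => ENNReal.ofReal (w r)
  have : IsFiniteMeasure ν := isFiniteMeasure_withDensity_ofReal hw.2
  have hν : ∀ s (g : ℝ → ℝ), ∫ r in Ioi s, g r ∂ν = ∫ r in Ioi s ∩ S, w r * g r := fun s =>
    setIntegral_withDensity_ofReal hS measurableSet_Ioi hw.aemeasurable hw_nonneg
  have hg_nonneg : 0 ≤ S.indicator f := indicator_nonneg hf_nonneg
  have hgC : ∀ r, |S.indicator f r| ≤ C := fun r => by
    rw [abs_of_nonneg (hg_nonneg r)]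
    exact indicator_le' hfC (fun _ _ => (hf_nonneg t ht).trans (hfC t ht)) r
  have hstep : ∀ s, t ≤ s → S.indicator f s ≤ b + ∫ r in Ioi s, S.indicator f r ∂ν := by
    intro s hts
    rw [hν]
    by_cases hs : s ∈ S
    · rw [indicator_of_mem hs, setIntegral_congr_fun (measurableSet_Ioi.inter hS)
        fun r hr => by rw [indicator_of_mem hr.2]]
      exact h s hs hts
    · rw [indicator_of_notMem hs]
      exact add_nonneg hb (setIntegral_nonneg (measurableSet_Ioi.inter hS)
        fun r hr => mul_nonneg (hw_nonneg r hr.2) (hg_nonneg r))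
  have hνt : ν.real (Ioi t) = ∫ r in Ioi t ∩ S, w r := by simpa using hν t 1
  rw [← indicator_of_mem ht f, ← hνt]
  exact le_mul_exp_of_le_add_setIntegral_Ioi (hf.indicator hS) hgC hb hstep

end Gronwall

theorem integrable_prod_mul_of_integral_norm_le {α Ω : Type*}
    [MeasurableSpace α] [MeasurableSpace Ω] {μ : Measure α} [SFinite μ] {P : Measure Ω} [SFinite P]
    {u : α → ℝ} {Z : α → Ω → ℝ} {C : ℝ} (hu : Integrable u μ)
    (hZ : AEStronglyMeasurable (Function.uncurry Z) (μ.prod P))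
    (hZi : ∀ᵐ r ∂μ, Integrable (Z r) P) (hZC : ∀ᵐ r ∂μ, ∫ ω, ‖Z r ω‖ ∂P ≤ C) :
    Integrable (fun p : α × Ω => u p.1 * Z p.1 p.2) (μ.prod P) := by
  have hW : AEStronglyMeasurable (fun p : α × Ω => u p.1 * Z p.1 p.2) (μ.prod P) :=
    hu.aestronglyMeasurable.comp_fst.mul hZ
  refine (integrable_prod_iff hW).2
    ⟨?_, (hu.norm.mul_const C).mono' hW.norm.integral_prod_right' ?_⟩
  · filter_upwards [hZi] with r hr using hr.const_mul (u r)
  · filter_upwards [hZC] with r hr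
    simp_rw [norm_mul, integral_const_mul, norm_mul, norm_norm]
    rw [Real.norm_of_nonneg (integral_nonneg fun _ => norm_nonneg _)]
    gcongr

theorem ae_le_of_forall_setIntegral_le_of_stronglyMeasurable {Ω : Type*}
    {m m0 : MeasurableSpace Ω} {P : Measure Ω} {f g : Ω → ℝ} (hm : m ≤ m0)
    (hf : StronglyMeasurable[m] f) (hg : StronglyMeasurable[m] g)
    (hfi : Integrable f P) (hgi : Integrable g P)
    (hfg : ∀ A, MeasurableSet[m] A → ∫ ω in A, f ω ∂P ≤ ∫ ω in A, g ω ∂P) : f ≤ᵐ[P] g :=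
  ae_le_of_ae_le_trim <| ae_le_of_forall_setIntegral_le (hfi.trim hm hf) (hgi.trim hm hg)
    fun A hA _ => by rw [← setIntegral_trim hm hf hA, ← setIntegral_trim hm hg hA]; exact hfg A hA

theorem IsStronglyProgressive.stronglyMeasurable_uncurry {Ω : Type*}
    {m0 : MeasurableSpace Ω} {ℱ : Filtration ℝ m0} {Y : ℝ → Ω → ℝ}
    (hY : IsStronglyProgressive ℱ Y) : StronglyMeasurable (Function.uncurry Y) := by
  have hstop : ∀ n : ℕ, StronglyMeasurable fun p : ℝ × Ω => Y (min p.1 n) p.2 := fun n => by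
    have hcut : Measurable[_, Subtype.instMeasurableSpace.prod (ℱ n)]
        fun p : ℝ × Ω => ((⟨min p.1 n, mem_Iic.2 (min_le_right _ _)⟩ : Iic (n : ℝ)), p.2) :=
      (measurable_fst.min measurable_const).subtype_mk.prodMk (measurable_snd.mono le_rfl (ℱ.le n))
    exact (hY n).comp_measurable hcut
  refine stronglyMeasurable_of_tendsto atTop hstop (tendsto_pi_nhds.2 fun p => ?_)
  obtain ⟨N, hN⟩ := exists_nat_ge p.1
  refine tendsto_const_nhds.congr' ?_
  filter_upwards [eventually_ge_atTop N] with n hn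
  simp [Function.uncurry, min_eq_left (hN.trans (Nat.cast_le.2 hn))]

section ConditionalGronwall

variable {Ω : Type*} {m0 : MeasurableSpace Ω} {P : Measure Ω} [IsProbabilityMeasure P]
  {ℱ : Filtration ℝ m0} {S : Set ℝ} {Y : ℝ → Ω → ℝ} {Ψ : Ω → ℝ} {u : ℝ → ℝ} {k₁ k₂ C : ℝ}

theorem integrable_prod_mul_const_add_mul (hS : MeasurableSet S)
    (hY : StronglyMeasurable (Function.uncurry Y)) (hY_nonneg : ∀ t ω, 0 ≤ Y t ω)
    (hY_int : ∀ t ∈ S, Integrable (Y t) P) (hY_le : ∀ t ∈ S, ∫ ω, Y t ω ∂P ≤ C)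
    (hu : IntegrableOn u S) (hk₁ : 0 ≤ k₁) (hk₂ : 0 ≤ k₂) :
    Integrable (fun p : ℝ × Ω => u p.1 * (k₁ + k₂ * Y p.1 p.2)) ((volume.restrict S).prod P) := by
  refine integrable_prod_mul_of_integral_norm_le (Z := fun r ω => k₁ + k₂ * Y r ω)
    (C := k₁ + k₂ * C) hu (stronglyMeasurable_const.add (hY.const_mul k₂)).aestronglyMeasurable
    ?_ ?_
  · filter_upwards [ae_restrict_mem hS] with r hr
    exact (integrable_const _).add ((hY_int r hr).const_mul _)
  · filter_upwards [ae_restrict_mem hS] with r hr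
    simp_rw [Real.norm_of_nonneg (add_nonneg hk₁ (mul_nonneg hk₂ (hY_nonneg _ _)))]
    rw [integral_add (integrable_const _) ((hY_int r hr).const_mul _), integral_const_mul,
      integral_const, probReal_univ, one_smul]
    gcongr
    exact hY_le r hr

theorem setIntegral_setIntegral_mul_const_add_mul (hS : MeasurableSet S)
    (hY : StronglyMeasurable (Function.uncurry Y)) (hY_nonneg : ∀ t ω, 0 ≤ Y t ω)
    (hY_int : ∀ t ∈ S, Integrable (Y t) P) (hY_le : ∀ t ∈ S, ∫ ω, Y t ω ∂P ≤ C)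
    (hu : IntegrableOn u S) (hk₁ : 0 ≤ k₁) (hk₂ : 0 ≤ k₂) (A : Set Ω) :
    ∫ ω in A, (∫ r in S, u r * (k₁ + k₂ * Y r ω)) ∂P
      = k₁ * P.real A * (∫ r in S, u r) + ∫ r in S, k₂ * u r * ∫ ω in A, Y r ω ∂P := by
  have hW := (integrable_prod_mul_const_add_mul hS hY hY_nonneg hY_int hY_le hu hk₁ hk₂).restrict
    (s := univ ×ˢ A)
  rw [← Measure.prod_restrict, Measure.restrict_univ] at hW
  have hYA : IntegrableOn (fun r => k₂ * u r * ∫ ω in A, Y r ω ∂P) S := by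
    refine (hu.const_mul k₂).mul_bdd hY.integral_prod_right'.aestronglyMeasurable (c := C) ?_
    filter_upwards [ae_restrict_mem hS] with r hr
    rw [Real.norm_of_nonneg (integral_nonneg fun ω => hY_nonneg r ω)]
    exact (setIntegral_le_integral (hY_int r hr) (ae_of_all _ (hY_nonneg r))).trans (hY_le r hr)
  rw [integral_integral_swap (f := fun ω r => u r * (k₁ + k₂ * Y r ω)) hW.swap,
    ← integral_const_mul, ← integral_add (hu.const_mul _) hYA]
  refine setIntegral_congr_fun hS fun r hr => ?_
  rw [integral_const_mul, integral_add (integrable_const _) ((hY_int r hr).restrict.const_mul _),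
    setIntegral_const, integral_const_mul, smul_eq_mul]
  ring

theorem setIntegral_le_add_setIntegral_Ioi (hS : MeasurableSet S)
    (hY : StronglyMeasurable (Function.uncurry Y)) (hY_nonneg : ∀ t ω, 0 ≤ Y t ω)
    (hY_int : ∀ t ∈ S, Integrable (Y t) P) (hY_le : ∀ t ∈ S, ∫ ω, Y t ω ∂P ≤ C)
    (hΨ : Integrable Ψ P) (hu : IntegrableOn u S) (hu_nonneg : ∀ s ∈ S, 0 ≤ u s)
    (hk₁ : 0 ≤ k₁) (hk₂ : 0 ≤ k₂) {s : ℝ}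
    (hmain : ∀ᵐ ω ∂P, Y s ω ≤ P[Ψ | ℱ s] ω
      + P[fun ω' => ∫ r in Ioi s ∩ S, u r * (k₁ + k₂ * Y r ω') | ℱ s] ω)
    (hs : s ∈ S) {A : Set Ω} (hA : MeasurableSet[ℱ s] A) :
    ∫ ω in A, Y s ω ∂P ≤ ∫ ω in A, Ψ ω ∂P + k₁ * P.real A * (∫ r in S, u r)
      + ∫ r in Ioi s ∩ S, k₂ * u r * ∫ ω in A, Y r ω ∂P := by
  have hV : MeasurableSet (Ioi s ∩ S) := measurableSet_Ioi.inter hS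
  have hY_int' : ∀ t ∈ Ioi s ∩ S, Integrable (Y t) P := fun t ht => hY_int t ht.2
  have hY_le' : ∀ t ∈ Ioi s ∩ S, ∫ ω, Y t ω ∂P ≤ C := fun t ht => hY_le t ht.2
  have hu' : IntegrableOn u (Ioi s ∩ S) := hu.mono_set inter_subset_right
  have hW := integrable_prod_mul_const_add_mul hV hY hY_nonneg hY_int' hY_le' hu' hk₁ hk₂
  calc ∫ ω in A, Y s ω ∂P
      ≤ ∫ ω in A, (P[Ψ | ℱ s] ω
          + P[fun ω' => ∫ r in Ioi s ∩ S, u r * (k₁ + k₂ * Y r ω') | ℱ s] ω) ∂P :=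
        setIntegral_mono_ae (hY_int s hs).integrableOn
          (integrable_condExp.add integrable_condExp).integrableOn hmain
    _ = ∫ ω in A, Ψ ω ∂P + (k₁ * P.real A * (∫ r in Ioi s ∩ S, u r)
          + ∫ r in Ioi s ∩ S, k₂ * u r * ∫ ω in A, Y r ω ∂P) := by
        rw [integral_add integrable_condExp.integrableOn integrable_condExp.integrableOn,
          setIntegral_condExp (ℱ.le s) hΨ hA,
          setIntegral_condExp (ℱ.le s) hW.integral_prod_right hA,
          setIntegral_setIntegral_mul_const_add_mul hV hY hY_nonneg hY_int' hY_le' hu' hk₁ hk₂]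
    _ ≤ _ := by
        rw [← add_assoc]
        gcongr
        exacts [(ae_restrict_mem hS).mono hu_nonneg, inter_subset_right]

theorem setIntegral_le_mul_exp (hS : MeasurableSet S)
    (hY : StronglyMeasurable (Function.uncurry Y)) (hY_nonneg : ∀ t ω, 0 ≤ Y t ω)
    (hY_int : ∀ t ∈ S, Integrable (Y t) P) (hY_le : ∀ t ∈ S, ∫ ω, Y t ω ∂P ≤ C)
    (hΨ : Integrable Ψ P) (hΨ_nonneg : 0 ≤ Ψ) (hu : IntegrableOn u S)
    (hu_nonneg : ∀ s ∈ S, 0 ≤ u s) (hk₁ : 0 ≤ k₁) (hk₂ : 0 ≤ k₂)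
    (hmain : ∀ s ∈ S, ∀ᵐ ω ∂P, Y s ω ≤ P[Ψ | ℱ s] ω
      + P[fun ω' => ∫ r in Ioi s ∩ S, u r * (k₁ + k₂ * Y r ω') | ℱ s] ω)
    {t : ℝ} (ht : t ∈ S) {A : Set Ω} (hA : MeasurableSet[ℱ t] A) :
    ∫ ω in A, Y t ω ∂P
      ≤ (∫ ω in A, Ψ ω ∂P + k₁ * P.real A * ∫ r in S, u r) * Real.exp (k₂ * ∫ r in S, u r) := by
  have hb : 0 ≤ ∫ ω in A, Ψ ω ∂P + k₁ * P.real A * ∫ r in S, u r :=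
    add_nonneg (integral_nonneg hΨ_nonneg)
      (mul_nonneg (by positivity) (setIntegral_nonneg hS hu_nonneg))
  calc ∫ ω in A, Y t ω ∂P
      ≤ (∫ ω in A, Ψ ω ∂P + k₁ * P.real A * ∫ r in S, u r)
          * Real.exp (∫ r in Ioi t ∩ S, k₂ * u r) :=
        le_mul_exp_of_le_add_setIntegral_Ioi_inter hS (hu.const_mul k₂)
          (fun r hr => mul_nonneg hk₂ (hu_nonneg r hr)) hY.integral_prod_right'.measurable
          (fun r _ => integral_nonneg (hY_nonneg r))
          (fun r hr => (setIntegral_le_integral (hY_int r hr) (ae_of_all _ (hY_nonneg r))).trans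
            (hY_le r hr)) hb
          (fun s hs hts => setIntegral_le_add_setIntegral_Ioi hS hY hY_nonneg hY_int hY_le hΨ hu
            hu_nonneg hk₁ hk₂ (hmain s hs) hs (ℱ.mono hts A hA)) ht
    _ ≤ _ := by
        rw [integral_const_mul]
        gcongr
        exacts [(ae_restrict_mem hS).mono hu_nonneg, inter_subset_right]

end ConditionalGronwall

end MeasureTheory

theorem measurableSet_timeSet (T : EReal) : MeasurableSet (timeSet T) :=
  (measurableSet_le measurable_const measurable_id).inter
    (measurableSet_le measurable_coe_real_ereal measurable_const)

theorem conditional_gronwall_general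
    {Ω : Type*} {m0 : MeasurableSpace Ω} (P : Measure Ω) [IsProbabilityMeasure P]
    (ℱ : Filtration ℝ m0)
    (T : EReal)
    (Y : ℝ → Ω → ℝ)
    (hY_nonneg : ∀ t ω, 0 ≤ Y t ω)
    (hY_prog : ProgMeasurable ℱ fun t ω => Y t ω)
    (hY_int : ∀ t ∈ timeSet T, Integrable (Y t) P)
    (hY_sup : ∃ C, ∀ t ∈ timeSet T, ∫ ω, Y t ω ∂P ≤ C)
    (φ : ℝ → Ω → ℝ)
    (hφ_nonneg : ∀ t ω, 0 ≤ φ t ω)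
    (hφ_int : Integrable (fun ω => ∫ s in timeSet T, φ s ω) P)
    (u : ℝ → ℝ)
    (hu_nonneg : ∀ s ∈ timeSet T, 0 ≤ u s)
    (hu_int : IntegrableOn u (timeSet T))
    (k₁ k₂ : ℝ) (hk₁ : 0 ≤ k₁) (hk₂ : 0 ≤ k₂)
    (hmain : ∀ t ∈ timeSet T, ∀ᵐ ω ∂P,
      Y t ω ≤ (P[fun ω' => ∫ s in timeSet T, φ s ω' | ℱ t]) ω
        + (P[fun ω' => ∫ s in Ioi t ∩ timeSet T, u s * (k₁ + k₂ * Y s ω') | ℱ t]) ω) :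
    ∀ t ∈ timeSet T, ∀ᵐ ω ∂P,
      Y t ω ≤ (k₁ * (∫ s in timeSet T, u s)
          + (P[fun ω' => ∫ s in timeSet T, φ s ω' | ℱ t]) ω)
        * Real.exp (k₂ * ∫ s in timeSet T, u s) := by
  intro t ht
  have hS := measurableSet_timeSet T
  obtain ⟨C, hC⟩ := hY_sup
  refine ae_le_of_forall_setIntegral_le_of_stronglyMeasurable (ℱ.le t)
    (IsStronglyProgressive.stronglyAdapted hY_prog t)
    ((stronglyMeasurable_const.add stronglyMeasurable_condExp).mul stronglyMeasurable_const)
    (hY_int t ht) (((integrable_const _).add integrable_condExp).mul_const _) fun A hA => ?_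
  rw [integral_mul_const, integral_add (integrable_const _).integrableOn
    integrable_condExp.integrableOn, setIntegral_const, setIntegral_condExp (ℱ.le t) hφ_int hA,
    smul_eq_mul, add_comm, mul_left_comm, ← mul_assoc]
  exact setIntegral_le_mul_exp hS hY_prog.stronglyMeasurable_uncurry hY_nonneg hY_int hC hφ_int
    (fun ω => setIntegral_nonneg hS fun s _ => hφ_nonneg s ω) hu_int hu_nonneg hk₁ hk₂ hmain ht hA

/-- **Conditional Gronwall estimate (20) in the proof of Theorem 2.4.** Let `Y` be a
nonnegative progressively measurable process with `Y_t` integrable and `sup_t E[Y_t] < ∞`,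
`φ ≥ 0` progressively measurable with `E[∫₀^T φ_s ds] < ∞`, `u ∈ L¹([0,T];ℝ₊)`, `k₁, k₂ ≥ 0`.
If `Y_t ≤ E[∫₀^T φ_s ds | F_t] + E[∫_t^T u(s)(k₁ + k₂ Y_s) ds | F_t]` a.s. for each `t`,
then `Y_t ≤ (k₁ ∫₀^T u + E[∫₀^T φ_s ds | F_t]) · exp(k₂ ∫₀^T u)` a.s. for each `t`. -/
theorem conditional_gronwall
    {Ω : Type*} {m0 : MeasurableSpace Ω} (P : Measure Ω) [IsProbabilityMeasure P]
    (hPcomplete : P.IsComplete)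
    (ℱ : Filtration ℝ m0)
    (T : EReal) (hT : 0 < T)
    (Y : ℝ → Ω → ℝ)
    (hY_nonneg : ∀ t ω, 0 ≤ Y t ω)
    (hY_prog : ProgMeasurable ℱ fun t ω => Y t ω)
    (hY_int : ∀ t ∈ timeSet T, Integrable (Y t) P)
    (hY_sup : ∃ C, ∀ t ∈ timeSet T, ∫ ω, Y t ω ∂P ≤ C)
    (φ : ℝ → Ω → ℝ)
    (hφ_nonneg : ∀ t ω, 0 ≤ φ t ω)
    (hφ_prog : ProgMeasurable ℱ fun t ω => φ t ω)
    (hφ_int : Integrable (fun ω => ∫ s in timeSet T, φ s ω) P)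
    (u : ℝ → ℝ)
    (hu_nonneg : ∀ s ∈ timeSet T, 0 ≤ u s)
    (hu_int : IntegrableOn u (timeSet T))
    (k₁ k₂ : ℝ) (hk₁ : 0 ≤ k₁) (hk₂ : 0 ≤ k₂)
    (hmain : ∀ t ∈ timeSet T, ∀ᵐ ω ∂P,
      Y t ω ≤ (P[fun ω' => ∫ s in timeSet T, φ s ω' | ℱ t]) ω
        + (P[fun ω' => ∫ s in Ioi t ∩ timeSet T, u s * (k₁ + k₂ * Y s ω') | ℱ t]) ω) :
    ∀ t ∈ timeSet T, ∀ᵐ ω ∂P,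
      Y t ω ≤ (k₁ * (∫ s in timeSet T, u s)
          + (P[fun ω' => ∫ s in timeSet T, φ s ω' | ℱ t]) ω)
        * Real.exp (k₂ * ∫ s in timeSet T, u s) :=
  conditional_gronwall_general P ℱ T Y hY_nonneg hY_prog hY_int hY_sup φ hφ_nonneg hφ_int u
    hu_nonneg hu_int k₁ k₂ hk₁ hk₂ hmain
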